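/- Let a, b, c, d be real numbers with ad − bc = 1 and b > 0, and let f ∈ L¹(ℝ) be such that F^{(a,b,c,d)} ∈ L¹(ℝ). Then for almost every x ∈ ℝ, f(x) = ∫_ℝ K^{(d,−b,−c,a)}(x, ω) F^{(a,b,c,d)}(ω) dω. -/

import Mathlib

/-!
With the chirp `e_α(x) = exp(iαx²)`, the LCT factors as
`F(ω) = (2πib)^(-1/2) e_{d/2b}(ω) 𝓕(e_{a/2b} f)(ω / 2πb)`, and the inverse kernel factors the same
way with the opposite chirps. Hence the outer chirps cancel, the substitution `ξ = ω / 2πb`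
contributes `2πb`, which cancels the constant `√(2πib) √(-2πib) = 2πb`, and the inversion integral
becomes `e_{-a/2b}(x) 𝓕⁻(𝓕(e_{a/2b} f))(x)`. Everything thus reduces to Fourier inversion almost
everywhere for `g ∈ L¹` with `𝓕 g ∈ L¹`: tested against a smooth compactly supported `ψ`, whose
transforms are Schwartz, it follows from the multiplication formula `∫ 𝓕 φ • g = ∫ φ • 𝓕 g` and
inversion for `ψ`.
-/

open MeasureTheory Complex Filter Topology

/-- The LCT kernel `K^{(a,b,c,d)}(ω, x)` on the real line. -/
noncomputable def lctKernel (a b c d : ℝ) (ω x : ℝ) : ℂ :=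
  ((2 * Real.pi * Complex.I * b) ^ ((2 : ℂ)⁻¹))⁻¹ *
    Complex.exp (Complex.I *
      ((d * ω ^ 2 / (2 * b) - ω * x / b + a * x ^ 2 / (2 * b) : ℝ) : ℂ))

/-- The linear canonical transform of `f` with parameters `(a,b,c,d)`. -/
noncomputable def lct (a b c d : ℝ) (f : ℝ → ℂ) (ω : ℝ) : ℂ :=
  ∫ x : ℝ, lctKernel a b c d ω x * f x

/-- The kernel `K^{(d,−b,−c,a)}(z, ω)` with complex first argument. -/
noncomputable def lctKernelInv (a b c d : ℝ) (z : ℂ) (ω : ℝ) : ℂ :=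
  ((-2 * Real.pi * Complex.I * b) ^ ((2 : ℂ)⁻¹))⁻¹ *
    Complex.exp (Complex.I *
      (-(a : ℂ) * z ^ 2 / (2 * (b : ℂ)) + z * (ω : ℂ) / (b : ℂ) -
        (d : ℂ) * (ω : ℂ) ^ 2 / (2 * (b : ℂ))))

open FourierTransform Real

section FourierInversion

open scoped ContDiff

variable {V E : Type*} [NormedAddCommGroup V] [InnerProductSpace ℝ V] [FiniteDimensional ℝ V]
  [MeasurableSpace V] [BorelSpace V] [NormedAddCommGroup E] [NormedSpace ℂ E]

theorem continuous_fourierInv {f : V → E} (hf : Integrable f) : Continuous (𝓕⁻ f) :=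
  VectorFourier.fourierIntegral_continuous Real.continuous_fourierChar continuous_inner.neg hf

variable [CompleteSpace E]

theorem integral_fourier_smul_eq {f : V → ℂ} {g : V → E} (hf : Integrable f) (hg : Integrable g) :
    ∫ ξ, 𝓕 f ξ • g ξ = ∫ x, f x • 𝓕 g x := by
  have := VectorFourier.integral_fourierIntegral_smul_eq_flip (L := innerₗ V)
    Real.continuous_fourierChar continuous_inner hf hg
  rwa [flip_innerₗ] at this

theorem integral_fourierInv_smul_eq {f : V → ℂ} {g : V → E} (hf : Integrable f)
    (hg : Integrable g) : ∫ ξ, 𝓕⁻ f ξ • g ξ = ∫ x, f x • 𝓕⁻ g x := by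
  have := VectorFourier.integral_fourierIntegral_smul_eq_flip (L := -innerₗ V)
    Real.continuous_fourierChar continuous_inner.neg hf hg
  have flip_neg_innerₗ : (-innerₗ V).flip = -innerₗ V :=
    LinearMap.ext₂ fun x y ↦ by simp [real_inner_comm]
  rwa [flip_neg_innerₗ] at this

theorem MeasureTheory.Integrable.ae_eq_fourierInv_fourier {f : V → E} (hf : Integrable f)
    (h'f : Integrable (𝓕 f)) : f =ᵐ[volume] 𝓕⁻ (𝓕 f) := by
  refine ae_eq_of_integral_contDiff_smul_eq hf.locallyIntegrable
    (continuous_fourierInv h'f).locallyIntegrable fun g g_diff g_supp ↦ ?_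
  set ψ : V → ℂ := fun x ↦ (g x : ℂ)
  have ψ_diff : ContDiff ℝ ∞ ψ := ofRealCLM.contDiff.comp g_diff
  have ψ_supp : HasCompactSupport ψ := g_supp.comp_left ofReal_zero
  have ψ_int : Integrable ψ := ψ_diff.continuous.integrable_of_hasCompactSupport ψ_supp
  have ψ_eq : (ψ_supp.toSchwartzMap ψ_diff : V → ℂ) = ψ := rfl
  have Fψ_int : Integrable (𝓕 ψ) := by
    rw [← ψ_eq, ← SchwartzMap.fourier_coe]
    exact SchwartzMap.integrable _
  have Finvψ_int : Integrable (𝓕⁻ ψ) := by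
    rw [← ψ_eq, ← SchwartzMap.fourierInv_coe]
    exact SchwartzMap.integrable _
  simp_rw [← Complex.coe_smul]
  calc ∫ x, ψ x • f x
      = ∫ x, 𝓕 (𝓕⁻ ψ) x • f x := by rw [ψ_diff.continuous.fourier_fourierInv_eq ψ_int Fψ_int]
    _ = ∫ x, 𝓕⁻ ψ x • 𝓕 f x := integral_fourier_smul_eq Finvψ_int hf
    _ = ∫ x, ψ x • 𝓕⁻ (𝓕 f) x := integral_fourierInv_smul_eq ψ_int h'f

end FourierInversion

open ComplexConjugate

theorem cpow_inv_two_mul_conj_cpow_inv_two {z : ℂ} (hz : z.arg ≠ π) :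
    z ^ (2⁻¹ : ℂ) * conj z ^ (2⁻¹ : ℂ) = ‖z‖ := by
  have conj_two_inv : conj (2⁻¹ : ℂ) = 2⁻¹ := by rw [map_inv₀, map_ofNat]
  have norm_sq : ‖z ^ (2⁻¹ : ℂ)‖ ^ 2 = ‖z‖ := by rw [← norm_pow, cpow_ofNat_inv_pow]
  rw [conj_cpow _ _ hz, conj_two_inv, mul_conj, normSq_eq_norm_sq, norm_sq]

theorem two_pi_I_mul_cpow_inv_two_mul_neg_cpow_inv_two (b : ℝ) :
    (2 * π * I * b) ^ (2⁻¹ : ℂ) * (-2 * π * I * b) ^ (2⁻¹ : ℂ) = (2 * π * |b| : ℝ) := by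
  have hconj : (-2 * π * I * b : ℂ) = conj (2 * π * I * b) := by simp [map_ofNat]
  have harg : (2 * π * I * b : ℂ).arg ≠ π := by simp [arg_eq_pi_iff]
  rw [hconj, cpow_inv_two_mul_conj_cpow_inv_two harg]
  simp [abs_of_pos pi_pos]

noncomputable def chirp (α x : ℝ) : ℂ := cexp ((α * x ^ 2 : ℝ) * I)

theorem norm_chirp (α x : ℝ) : ‖chirp α x‖ = 1 :=
  norm_exp_ofReal_mul_I _

theorem continuous_chirp (α : ℝ) : Continuous (chirp α) := by
  unfold chirp; fun_prop

theorem chirp_neg_mul_chirp (α x : ℝ) : chirp (-α) x * chirp α x = 1 := by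
  rw [chirp, chirp, ← Complex.exp_add, ← add_mul, ← ofReal_add, neg_mul, neg_add_cancel,
    ofReal_zero, zero_mul, Complex.exp_zero]

theorem MeasureTheory.Integrable.chirp_mul {f : ℝ → ℂ} (hf : Integrable f) (α : ℝ) :
    Integrable fun x ↦ chirp α x * f x :=
  hf.bdd_mul (continuous_chirp α).aestronglyMeasurable (.of_forall fun x ↦ (norm_chirp α x).le)

section LCT

variable {a b c d : ℝ}

theorem lctKernel_eq (ω x : ℝ) :
    lctKernel a b c d ω x = ((2 * π * I * b) ^ (2⁻¹ : ℂ))⁻¹ * chirp (d / (2 * b)) ω *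
      (cexp (↑(-2 * π * x * (ω / (2 * π * b))) * I) * chirp (a / (2 * b)) x) := by
  simp only [lctKernel, chirp, mul_assoc, ← Complex.exp_add]
  congr 2
  push_cast
  field_simp
  ring

theorem lct_eq_fourier (f : ℝ → ℂ) (ω : ℝ) :
    lct a b c d f ω = ((2 * π * I * b) ^ (2⁻¹ : ℂ))⁻¹ * chirp (d / (2 * b)) ω *
      𝓕 (fun x ↦ chirp (a / (2 * b)) x * f x) (ω / (2 * π * b)) := by
  rw [fourier_real_eq_integral_exp_smul]
  simp_rw [lct, lctKernel_eq, smul_eq_mul, mul_assoc, integral_const_mul]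

theorem lctKernelInv_eq (x ω : ℝ) :
    lctKernelInv a b c d x ω = ((-2 * π * I * b) ^ (2⁻¹ : ℂ))⁻¹ * chirp (-(a / (2 * b))) x *
      chirp (-(d / (2 * b))) ω * cexp (↑(2 * π * (ω / (2 * π * b) * x)) * I) := by
  simp only [lctKernelInv, chirp, mul_assoc, ← Complex.exp_add]
  congr 2
  push_cast
  field_simp
  ring

theorem lctKernelInv_mul_lct (f : ℝ → ℂ) (x ω : ℝ) :
    lctKernelInv a b c d x ω * lct a b c d f ω = ((2 * π * |b| : ℝ) : ℂ)⁻¹ *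
      chirp (-(a / (2 * b))) x * (cexp (↑(2 * π * (ω / (2 * π * b) * x)) * I) *
        𝓕 (fun y ↦ chirp (a / (2 * b)) y * f y) (ω / (2 * π * b))) := by
  rw [lctKernelInv_eq, lct_eq_fourier, ← two_pi_I_mul_cpow_inv_two_mul_neg_cpow_inv_two, mul_inv]
  linear_combination ((-2 * π * I * b) ^ (2⁻¹ : ℂ))⁻¹ * ((2 * π * I * b) ^ (2⁻¹ : ℂ))⁻¹ *
    chirp (-(a / (2 * b))) x * cexp (↑(2 * π * (ω / (2 * π * b) * x)) * I) *
    𝓕 (fun y ↦ chirp (a / (2 * b)) y * f y) (ω / (2 * π * b)) *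
    chirp_neg_mul_chirp (d / (2 * b)) ω

theorem integral_lctKernelInv_mul_lct (hb : b ≠ 0) (f : ℝ → ℂ) (x : ℝ) :
    ∫ ω, lctKernelInv a b c d x ω * lct a b c d f ω =
      chirp (-(a / (2 * b))) x * 𝓕⁻ (𝓕 (fun y ↦ chirp (a / (2 * b)) y * f y)) x := by
  set G := 𝓕 (fun y ↦ chirp (a / (2 * b)) y * f y)
  have fourierInv_G : ∫ ξ, cexp (↑(2 * π * (ξ * x)) * I) * G ξ = 𝓕⁻ G x := by
    rw [fourierInv_eq']
    congr 1 with ξ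
    rw [smul_eq_mul, RCLike.inner_apply', conj_trivial]
  have hC : ((2 * π * |b| : ℝ) : ℂ) ≠ 0 := by simp [hb, pi_ne_zero]
  simp_rw [lctKernelInv_mul_lct, integral_const_mul]
  rw [Measure.integral_comp_div (fun ξ ↦ cexp (↑(2 * π * (ξ * x)) * I) * G ξ), fourierInv_G,
    Complex.real_smul, abs_mul, abs_mul, abs_two, abs_of_pos pi_pos]
  field_simp

theorem integrable_fourier_chirp_mul_of_integrable_lct (hb : b ≠ 0) {f : ℝ → ℂ}
    (hF : Integrable (lct a b c d f)) :
    Integrable (𝓕 (fun x ↦ chirp (a / (2 * b)) x * f x)) := by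
  have hC : (2 * π * I * b : ℂ) ^ (2⁻¹ : ℂ) ≠ 0 := by simp [cpow_eq_zero_iff, hb, pi_ne_zero]
  have h : (fun ω ↦ 𝓕 (fun x ↦ chirp (a / (2 * b)) x * f x) (ω / (2 * π * b))) =
      fun ω ↦ chirp (-(d / (2 * b))) ω * ((2 * π * I * b) ^ (2⁻¹ : ℂ) * lct a b c d f ω) := by
    ext ω
    rw [lct_eq_fourier, mul_assoc _ (chirp _ _), mul_inv_cancel_left₀ hC, ← mul_assoc,
      chirp_neg_mul_chirp, one_mul]
  rw [← integrable_comp_div_iff _ (by positivity : 2 * π * b ≠ 0), h]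
  exact (hF.const_mul _).chirp_mul _

end LCT

theorem lct_inversion_general
    (a b c d : ℝ) (hb : 0 < b)
    (f : ℝ → ℂ) (hf : Integrable f) (hF : Integrable (lct a b c d f)) :
    ∀ᵐ x : ℝ, f x = ∫ ω : ℝ, lctKernelInv a b c d (x : ℂ) ω * lct a b c d f ω := by
  filter_upwards [(hf.chirp_mul (a / (2 * b))).ae_eq_fourierInv_fourier
    (integrable_fourier_chirp_mul_of_integrable_lct hb.ne' hF)] with x hx
  rw [integral_lctKernelInv_mul_lct hb.ne', ← hx, ← mul_assoc, chirp_neg_mul_chirp, one_mul]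

/-- the inversion formula for the LCT. -/
theorem lct_inversion
    (a b c d : ℝ) (hb : 0 < b) (habcd : a * d - b * c = 1)
    (f : ℝ → ℂ) (hf : Integrable f) (hF : Integrable (lct a b c d f)) :
    ∀ᵐ x : ℝ, f x = ∫ ω : ℝ, lctKernelInv a b c d (x : ℂ) ω * lct a b c d f ω :=
  lct_inversion_general a b c d hb f hf hF
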